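/- Let ψ be the ℂ-algebra homomorphism from the polynomial ring ℂ[z_X, z_S, z_T, z₁₂, z₂₃, z₃₁, z₂₁, z₃₂, z₁₃] to the group algebra ℂ[ℤ¹⁰] (the AddMonoidAlgebra of ℤ¹⁰ over ℂ) sending z_X, z_S, z_T, z_{ij} respectively to the basis elements of g_X, g_S, g_T, g_{ij}. Then the kernel of ψ is the principal ideal generated by z_X·z_S·z_T − z₁₂·z₂₃·z₃₁. -/

import Mathlib

/-! The map `ψ` sends the monomial `z^e` to the basis element of `E e`, where `E` is the
`ℕ`-linear map sending the `i`-th unit vector to the `i`-th generator. Trading every copy of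
`z₁₂z₂₃z₃₁` in a monomial for `z_X z_S z_T` changes it only modulo the binomial and leaves `E`
unchanged. On the resulting normal forms, those with `min(e₃, e₄, e₅) = 0` (exponents indexed by
`Fin 9` in the order of the variables), `E` is injective: the coordinates of `E e` give
`e₆, e₇, e₈`, the sums `e₁ + eⱼ` and `e₂ + eⱼ` for `j = 3, 4, 5`, and the total degree, and the
vanishing minimum then recovers `e₁`. So an element of the kernel is congruent modulo the binomial
to its normal form, whose image is still zero, hence which is zero. -/

/-- The nine elements `g_X, g_S, g_T, g₁₂, g₂₃, g₃₁, g₂₁, g₃₂, g₁₃` of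
`ℤ¹⁰ = ℤ⁹ × ℤ` (first nine coordinates ordered `(a₁,b₁,c₁,a₂,a₃,b₂,b₃,c₂,c₃)`,
last coordinate the level), listed in the variable order
`z_X, z_S, z_T, z₁₂, z₂₃, z₃₁, z₂₁, z₃₂, z₁₃`. -/
def cbGens : Fin 9 → Fin 10 → ℤ :=
  ![![0, 0, 0, 0, 0, 0, 0, 0, 0, 1],  -- g_X
    ![0, 0, 0, 1, 0, 1, 0, 1, 0, 1],  -- g_S
    ![0, 0, 0, 0, 1, 0, 1, 0, 1, 1],  -- g_T
    ![0, 0, 0, 1, 0, 0, 1, 0, 0, 1],  -- g₁₂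
    ![0, 0, 0, 0, 0, 1, 0, 0, 1, 1],  -- g₂₃
    ![0, 0, 0, 0, 1, 0, 0, 1, 0, 1],  -- g₃₁
    ![0, 1, 0, 0, 0, 0, 0, 0, 0, 1],  -- g₂₁
    ![0, 0, 1, 0, 0, 0, 0, 0, 0, 1],  -- g₃₂
    ![1, 0, 0, 0, 0, 0, 0, 0, 0, 1]]  -- g₁₃

/-- The `ℂ`-algebra map `ψ : ℂ[z_X, z_S, z_T, z₁₂, z₂₃, z₃₁, z₂₁, z₃₂, z₁₃] → ℂ[ℤ¹⁰]`
sending each variable to the corresponding basis element of the group algebra. -/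
noncomputable def psiCB : MvPolynomial (Fin 9) ℂ →ₐ[ℂ] AddMonoidAlgebra ℂ (Fin 10 → ℤ) :=
  MvPolynomial.aeval fun i => AddMonoidAlgebra.of' ℂ (Fin 10 → ℤ) (cbGens i)

open MvPolynomial Finsupp

namespace AddMonoidAlgebra

variable {R M N : Type*}

theorem mapDomain_eq_zero_of_retraction [Semiring R] {f : M → N} {r : M → M}
    (hfr : ∀ m, f (r m) = f m) (hf : Set.InjOn f (Set.range r)) {x : AddMonoidAlgebra R M}
    (hx : mapDomain f x = 0) : mapDomain r x = 0 := by
  have hcomp : Finsupp.mapDomain f (mapDomain r x).coeff = Finsupp.mapDomain f x.coeff := by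
    rw [coeff_mapDomain, ← Finsupp.mapDomain_comp, Function.comp_def]
    simp only [hfr]
  refine coeff_injective (Finsupp.mapDomain_injOn _ hf ?_ (by simp) ?_)
  · classical
    intro m hm
    obtain ⟨n, -, rfl⟩ := Finset.mem_image.mp (Finsupp.mapDomain_support hm)
    exact Set.mem_range_self n
  · rw [hcomp, ← coeff_mapDomain, hx]
    simp only [coeff_zero, Finsupp.mapDomain_zero]

theorem mapDomain_sub_mem [Ring R] [AddMonoid M] {r : M → M} {I : Ideal (AddMonoidAlgebra R M)}
    (h : ∀ m c, single (r m) c - single m c ∈ I) (x : AddMonoidAlgebra R M) :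
    mapDomain r x - x ∈ I := by
  induction x using induction_linear with
  | zero => simp
  | add x y hx hy => simpa [mapDomain_add, add_sub_add_comm] using I.add_mem hx hy
  | single m c => simpa using h m c

end AddMonoidAlgebra

namespace MvPolynomial

variable {σ R : Type*} [CommRing R]

theorem monomial_add_nsmul_sub_mem_span (d u w : σ →₀ ℕ) (n : ℕ) (c : R) :
    monomial (d + n • w) c - monomial (d + n • u) c ∈
      Ideal.span {monomial w (1 : R) - monomial u 1} := by
  have hpow (v : σ →₀ ℕ) : monomial (d + n • v) c = monomial d c * monomial v 1 ^ n := by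
    rw [monomial_pow, monomial_mul, one_pow, mul_one]
  rw [Ideal.mem_span_singleton, hpow, hpow, ← mul_sub]
  exact (sub_dvd_pow_sub_pow _ _ n).mul_left _

theorem aeval_of'_eq_mapDomainAlgHom {G : Type*} [AddCommMonoid G] (g : σ → G) :
    aeval (fun i => AddMonoidAlgebra.of' R G (g i)) =
      AddMonoidAlgebra.mapDomainAlgHom R R (linearCombination ℕ g).toAddMonoidHom := by
  refine algHom_ext fun i => ?_
  rw [aeval_X, AddMonoidAlgebra.mapDomainAlgHom_apply, X, ← single_eq_monomial,
    AddMonoidAlgebra.mapDomain_single]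
  simp

end MvPolynomial

noncomputable def cbExponent : (Fin 9 →₀ ℕ) →+ (Fin 10 → ℤ) :=
  (linearCombination ℕ cbGens).toAddMonoidHom

theorem psiCB_eq_mapDomainAlgHom : psiCB = AddMonoidAlgebra.mapDomainAlgHom ℂ ℂ cbExponent :=
  aeval_of'_eq_mapDomainAlgHom cbGens

theorem cbExponent_apply (e : Fin 9 →₀ ℕ) :
    cbExponent e = ![(e 8 : ℤ), e 6, e 7, e 1 + e 3, e 2 + e 5, e 1 + e 4, e 2 + e 3, e 1 + e 5,
      e 2 + e 4, ∑ i, (e i : ℤ)] := by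
  ext j
  fin_cases j <;>
    simp [cbExponent, linearCombination_apply, Finsupp.sum_fintype, Fin.sum_univ_succ, cbGens]

noncomputable def expXST : Fin 9 →₀ ℕ := single 0 1 + single 1 1 + single 2 1

noncomputable def expCycle : Fin 9 →₀ ℕ := single 3 1 + single 4 1 + single 5 1

def cycleMult (e : Fin 9 →₀ ℕ) : ℕ := min (e 3) (min (e 4) (e 5))

noncomputable def normalForm (e : Fin 9 →₀ ℕ) : Fin 9 →₀ ℕ :=
  e - cycleMult e • expCycle + cycleMult e • expXST

theorem cycleMult_nsmul_expCycle_le (e : Fin 9 →₀ ℕ) : cycleMult e • expCycle ≤ e := by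
  intro i
  fin_cases i <;> simp [cycleMult, expCycle]

theorem cycleMult_normalForm (e : Fin 9 →₀ ℕ) : cycleMult (normalForm e) = 0 := by
  simp only [cycleMult, normalForm, expCycle, expXST, smul_add, smul_single, smul_eq_mul, mul_one,
    Finsupp.coe_add, coe_tsub, Pi.add_apply, Pi.sub_apply, single_eq_same, ne_eq, Fin.reduceEq,
    not_false_eq_true, single_eq_of_ne, add_zero, zero_add, min_eq_zero]
  omega

theorem cbExponent_expCycle : cbExponent expCycle = cbExponent expXST := by
  simp [cbExponent_apply, expCycle, expXST, Fin.sum_univ_succ]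

theorem cbExponent_normalForm (e : Fin 9 →₀ ℕ) : cbExponent (normalForm e) = cbExponent e := by
  conv_rhs => rw [← tsub_add_cancel_of_le (cycleMult_nsmul_expCycle_le e)]
  rw [normalForm, map_add, map_add, map_nsmul, map_nsmul, cbExponent_expCycle]

theorem cbExponent_injOn : Set.InjOn cbExponent {e | cycleMult e = 0} := by
  intro e he e' he' h
  simp only [Set.mem_ofPred_eq, cycleMult] at he he'
  rw [cbExponent_apply, cbExponent_apply, funext_iff] at h
  simp only [Fin.sum_univ_succ, Fin.succ_zero_eq_one, Fin.succ_one_eq_two, Fin.reduceSucc,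
    Finset.univ_unique, Fin.default_eq_zero, Finset.sum_singleton, Fin.forall_fin_succ,
    Matrix.cons_val_zero, Nat.cast_inj, Matrix.cons_val_succ, Matrix.cons_val_fin_one,
    forall_const] at h
  ext i
  fin_cases i <;> simp <;> omega

theorem monomial_expXST {R : Type*} [CommSemiring R] :
    monomial expXST (1 : R) = X 0 * X 1 * X 2 := by
  simp [X, monomial_mul, expXST]

theorem monomial_expCycle {R : Type*} [CommSemiring R] :
    monomial expCycle (1 : R) = X 3 * X 4 * X 5 := by
  simp [X, monomial_mul, expCycle]

theorem mapDomain_normalForm_sub_mem {R : Type*} [CommRing R] (p : MvPolynomial (Fin 9) R) :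
    AddMonoidAlgebra.mapDomain normalForm p - p ∈
      Ideal.span {(X 0 * X 1 * X 2 - X 3 * X 4 * X 5 : MvPolynomial (Fin 9) R)} := by
  rw [← monomial_expXST, ← monomial_expCycle]
  refine AddMonoidAlgebra.mapDomain_sub_mem (fun e c => ?_) p
  rw [single_eq_monomial, single_eq_monomial, normalForm]
  simpa only [tsub_add_cancel_of_le (cycleMult_nsmul_expCycle_le e)] using
    monomial_add_nsmul_sub_mem_span (e - cycleMult e • expCycle) expCycle expXST (cycleMult e) c

theorem psiCB_binomial : psiCB (X 0 * X 1 * X 2 - X 3 * X 4 * X 5) = 0 := by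
  rw [← monomial_expXST, ← monomial_expCycle, map_sub, psiCB_eq_mapDomainAlgHom,
    AddMonoidAlgebra.mapDomainAlgHom_apply, AddMonoidAlgebra.mapDomainAlgHom_apply,
    ← single_eq_monomial, ← single_eq_monomial, AddMonoidAlgebra.mapDomain_single,
    AddMonoidAlgebra.mapDomain_single, cbExponent_expCycle, sub_self]

open MvPolynomial in
/-- The kernel of `ψ` is the principal ideal generated by `z_X·z_S·z_T − z₁₂·z₂₃·z₃₁`. -/
theorem stmt_8 :
    RingHom.ker psiCB =
      Ideal.span {(X 0 * X 1 * X 2 - X 3 * X 4 * X 5 : MvPolynomial (Fin 9) ℂ)} := by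
  refine le_antisymm (fun p hp => ?_) ?_
  · rw [RingHom.mem_ker, psiCB_eq_mapDomainAlgHom, AddMonoidAlgebra.mapDomainAlgHom_apply] at hp
    have hnf : AddMonoidAlgebra.mapDomain normalForm p = 0 :=
      AddMonoidAlgebra.mapDomain_eq_zero_of_retraction cbExponent_normalForm
        (cbExponent_injOn.mono (Set.range_subset_iff.2 cycleMult_normalForm)) hp
    simpa [hnf] using mapDomain_normalForm_sub_mem p
  · rw [Ideal.span_le, Set.singleton_subset_iff, SetLike.mem_coe, RingHom.mem_ker, psiCB_binomial]
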